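/- arXiv:2309.15089 — 2 statements merged into one kernel-verified Lean document; each statement's English description precedes it below -/
import Mathlib

section
/- Let K be a field and let 0 → C' → C → C'' → 0 be a degreewise short exact sequence of ℤ-indexed chain complexes of K-vector spaces, each of which is finite-dimensional in every degree. Then dim_t H(C') + dim_t H(C'') ⪰ dim_t H(C); explicitly, there exists A : ℤ → ℕ such that for every i ∈ ℤ, dim_K H_i(C') + dim_K H_i(C'') − dim_K H_i(C) = A i + A (i−1). In particular dim_K H_i(C) ≤ dim_K H_i(C') + dim_K H_i(C'') for every i. -/
open CategoryTheory

/-!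
The homology long exact sequence of `0 → C' → C → C'' → 0` is exact at each of `H_i(C')`,
`H_i(C)`, `H_i(C'')`, so rank–nullity at these three spots gives
`dim H_i(C') + dim H_i(C'') - dim H_i(C) = rk δ_{i+1} + rk δ_i`, where
`δ_{i+1} : H_{i+1}(C'') → H_i(C')` is the connecting map. Hence `A i := rk δ_{i+1}` works.
-/

section

variable {K : Type*} [DivisionRing K]

lemma CategoryTheory.ShortComplex.Exact.finrank_eq_finrank_range_add_finrank_range
    {S : ShortComplex (ModuleCat K)} (hS : S.Exact) [FiniteDimensional K S.X₂] :
    Module.finrank K S.X₂ =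
      Module.finrank K (LinearMap.range S.f.hom) + Module.finrank K (LinearMap.range S.g.hom) := by
  rw [← S.g.hom.finrank_range_add_finrank_ker, ← hS.moduleCat_range_eq_ker, add_comm]

lemma CategoryTheory.ShortComplex.ShortExact.finrank_homology_add_finrank_homology {ι : Type*}
    {c : ComplexShape ι} {S : ShortComplex (HomologicalComplex (ModuleCat K) c)}
    (hS : S.ShortExact) {i j k : ι} (hij : c.Rel i j) (hjk : c.Rel j k)
    [FiniteDimensional K (S.X₁.homology j)] [FiniteDimensional K (S.X₂.homology j)]
    [FiniteDimensional K (S.X₃.homology j)] :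
    Module.finrank K (S.X₁.homology j) + Module.finrank K (S.X₃.homology j) =
      Module.finrank K (S.X₂.homology j) +
        Module.finrank K (LinearMap.range (hS.δ i j hij).hom) +
        Module.finrank K (LinearMap.range (hS.δ j k hjk).hom) := by
  have h₁ := (hS.homology_exact₁ i j hij).finrank_eq_finrank_range_add_finrank_range
  have h₂ := (hS.homology_exact₂ j).finrank_eq_finrank_range_add_finrank_range
  have h₃ := (hS.homology_exact₃ j k hjk).finrank_eq_finrank_range_add_finrank_range
  dsimp only at h₁ h₂ h₃
  omega

namespace HomologicalComplex

variable {ι : Type*} {c : ComplexShape ι}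

instance finiteDimensional_homology (C : HomologicalComplex (ModuleCat K) c) (i : ι)
    [FiniteDimensional K (C.X i)] : FiniteDimensional K (C.homology i) :=
  have : FiniteDimensional K (C.cycles i) := .of_injective (C.iCycles i).hom
    ((ModuleCat.mono_iff_injective _).mp inferInstance)
  .of_surjective (C.homologyπ i).hom ((ModuleCat.epi_iff_surjective _).mp inferInstance)

lemma exists_shortExact_of_injective_of_range_eq_ker_of_surjective
    {C₁ C₂ C₃ : HomologicalComplex (ModuleCat K) c} (f : C₁ ⟶ C₂) (g : C₂ ⟶ C₃)
    (hinj : ∀ i, Function.Injective (f.f i))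
    (hexact : ∀ i, LinearMap.range (f.f i).hom = LinearMap.ker (g.f i).hom)
    (hsurj : ∀ i, Function.Surjective (g.f i)) :
    ∃ hfg : f ≫ g = 0, (ShortComplex.mk f g hfg).ShortExact := by
  have hexact' (i : ι) : Function.Exact (f.f i) (g.f i) :=
    LinearMap.exact_iff.mpr (hexact i).symm
  refine ⟨by ext i x; exact (hexact' i).apply_apply_eq_zero x, ?_⟩
  exact shortExact_of_degreewise_shortExact _ fun i ↦
    ModuleCat.shortComplex_shortExact _ (hexact' i) (hinj i) (hsurj i)

end HomologicalComplex

end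

/-- **Sub-additivity of `dim_t` for short exact sequences of chain complexes.**
Let `K` be a field and `0 → C' → C → C'' → 0` a degreewise short exact sequence of
`ℤ`-indexed chain complexes of `K`-vector spaces, each finite-dimensional in every degree.
Then `dim_t H(C') + dim_t H(C'') ⪰ dim_t H(C)`: there is `A : ℤ → ℕ` with
`dim H_i(C') + dim H_i(C'') − dim H_i(C) = A i + A (i−1)` for all `i`; in particular
`dim H_i(C) ≤ dim H_i(C') + dim H_i(C'')` for every `i`. -/
theorem dimt_subadditive_of_shortExact
    (K : Type) [Field K]
    (C' C C'' : ChainComplex (ModuleCat K) ℤ)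
    (hC' : ∀ i : ℤ, FiniteDimensional K (C'.X i))
    (hC : ∀ i : ℤ, FiniteDimensional K (C.X i))
    (hC'' : ∀ i : ℤ, FiniteDimensional K (C''.X i))
    (f : C' ⟶ C) (g : C ⟶ C'')
    (hinj : ∀ i : ℤ, Function.Injective (f.f i))
    (hexact : ∀ i : ℤ, LinearMap.range (f.f i).hom = LinearMap.ker (g.f i).hom)
    (hsurj : ∀ i : ℤ, Function.Surjective (g.f i)) :
    (∃ A : ℤ → ℕ, ∀ i : ℤ,
      ((Module.finrank K (C'.homology i) : ℤ) +
        (Module.finrank K (C''.homology i) : ℤ)) -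
        (Module.finrank K (C.homology i) : ℤ) = (A i : ℤ) + (A (i - 1) : ℤ)) ∧
    (∀ i : ℤ, Module.finrank K (C.homology i) ≤
      Module.finrank K (C'.homology i) + Module.finrank K (C''.homology i)) := by
  obtain ⟨hfg, hS⟩ :=
    HomologicalComplex.exists_shortExact_of_injective_of_range_eq_ker_of_surjective
      f g hinj hexact hsurj
  have hsplit (i : ℤ) := hS.finrank_homology_add_finrank_homology
    (i := i + 1) (j := i) (k := i - 1) rfl (by simp)
  dsimp only at hsplit
  -- Stated for every `i → j`, since `δ i (i - 1)` is not syntactically `δ ((i - 1) + 1) (i - 1)`.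
  obtain ⟨A, hA⟩ : ∃ A : ℤ → ℕ, ∀ i j (hij : (ComplexShape.down ℤ).Rel i j),
      A j = Module.finrank K (LinearMap.range (hS.δ i j hij).hom) :=
    ⟨fun j ↦ Module.finrank K (LinearMap.range (hS.δ (j + 1) j rfl).hom), by rintro _ j rfl; rfl⟩
  refine ⟨⟨A, fun i ↦ ?_⟩, fun i ↦ by linarith [hsplit i]⟩
  have hi := hsplit i
  rw [← hA (i + 1) i rfl, ← hA i (i - 1) (by simp)] at hi
  omega
end

section
/- Let N ≥ 1, 0 ≤ k ≤ N, and let Z ∈ M_N(ℂ) be the diagonal matrix with diagonal entries d₁, …, d_N, where the d_i are pairwise distinct real numbers. Let P ∈ M_N(ℂ) be a Hermitian idempotent (Pᴴ = P and P² = P) of rank k. Then the following are equivalent: (i) tr((X·P − P·X)·Z) = 0 for every skew-Hermitian matrix X (i.e. Xᴴ = −X); (ii) P·Z = Z·P; (iii) there is a subset S ⊆ {1, …, N} with |S| = k such that P is the diagonal matrix whose i-th diagonal entry is 1 for i ∈ S and 0 otherwise, i.e. P is the orthogonal projection onto the span of the standard basis vectors e_i with i ∈ S. -/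
/-!
Cycling the trace turns (i) into `tr(X·[P, Z]) = 0` for all skew-Hermitian `X`. Since `P` and
`Z` are Hermitian, `[P, Z]` is itself skew-Hermitian, and choosing `X = [P, Z]` gives
`tr([P, Z]ᴴ[P, Z]) = 0`, i.e. `[P, Z] = 0`. A matrix commuting with a diagonal matrix with
distinct entries is diagonal, and a diagonal idempotent has entries `0` and `1`; its rank
counts the `1`s.
-/

open Matrix

namespace Matrix

variable {n R : Type*} [Fintype n]

theorem trace_commutator_mul [CommRing R] (X P Z : Matrix n n R) :
    trace ((X * P - P * X) * Z) = trace (X * (P * Z - Z * P)) := by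
  rw [sub_mul, mul_sub, trace_sub, trace_sub, mul_assoc, trace_mul_cycle P X Z,
    trace_mul_comm (Z * P) X]

theorem forall_skewHermitian_trace_commutator_mul_eq_zero_iff
    [CommRing R] [PartialOrder R] [StarRing R] [StarOrderedRing R] [NoZeroDivisors R]
    {P Z : Matrix n n R} (hP : P.IsHermitian) (hZ : Z.IsHermitian) :
    (∀ X : Matrix n n R, Xᴴ = -X → trace ((X * P - P * X) * Z) = 0) ↔ P * Z = Z * P := by
  simp_rw [trace_commutator_mul]
  refine ⟨fun h => ?_, fun h X _ => by rw [h, sub_self, mul_zero, trace_zero]⟩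
  set C := P * Z - Z * P
  have hC : Cᴴ = -C := by
    simp only [C, conjTranspose_sub, conjTranspose_mul, hP.eq, hZ.eq, neg_sub]
  have hCC : trace (Cᴴ * C) = 0 := by
    rw [hC, neg_mul, trace_neg, h C hC, neg_zero]
  exact sub_eq_zero.mp (trace_conjTranspose_mul_self_eq_zero_iff.mp hCC)

theorem isDiag_of_mul_diagonal_eq_diagonal_mul [DecidableEq n] [CommRing R] [NoZeroDivisors R]
    {d : n → R} (hd : Function.Injective d) {A : Matrix n n R}
    (h : A * diagonal d = diagonal d * A) : A.IsDiag := by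
  intro i j hij
  have hAij := congrFun (congrFun h i) j
  rw [mul_diagonal, diagonal_mul] at hAij
  have : A i j * (d j - d i) = 0 := by rw [mul_sub, hAij, mul_comm, sub_self]
  exact (mul_eq_zero.mp this).resolve_right (sub_ne_zero.mpr (hd.ne hij).symm)

theorem IsDiag.exists_eq_diagonal_ite_mem [DecidableEq n] [Semiring R] [IsLeftCancelMulZero R]
    {A : Matrix n n R} (hA : A.IsDiag) (hidem : IsIdempotentElem A) :
    ∃ S : Finset n, A = diagonal fun i => if i ∈ S then 1 else 0 := by
  classical
  obtain ⟨v, rfl⟩ : ∃ v, A = diagonal v := ⟨A.diag, hA.diagonal_diag.symm⟩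
  have hv (i : n) : v i = 0 ∨ v i = 1 := IsIdempotentElem.iff_eq_zero_or_one.mp <|
    congrFun (diagonal_injective ((diagonal_mul_diagonal v v).symm.trans hidem)) i
  refine ⟨({i | v i = 1} : Finset n), congrArg diagonal (funext fun i => ?_)⟩
  rcases hv i with hi | hi <;> simp [hi]

theorem rank_diagonal_ite_mem [DecidableEq n] {K : Type*} [Field K] (S : Finset n) :
    (diagonal fun i => if i ∈ S then (1 : K) else 0).rank = S.card := by
  classical
  rw [rank_diagonal, Fintype.card_subtype]
  simp

end Matrix

theorem hermitian_projection_critical_tfae_general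
    (N : ℕ) (k : ℕ)
    (d : Fin N → ℝ) (hd : Function.Injective d)
    (Z : Matrix (Fin N) (Fin N) ℂ) (hZ : Z = Matrix.diagonal fun i => (d i : ℂ))
    (P : Matrix (Fin N) (Fin N) ℂ)
    (hherm : Pᴴ = P) (hidem : P * P = P) (hrank : P.rank = k) :
    List.TFAE
      [∀ X : Matrix (Fin N) (Fin N) ℂ, Xᴴ = -X →
          Matrix.trace ((X * P - P * X) * Z) = 0,
        P * Z = Z * P,
        ∃ S : Finset (Fin N), S.card = k ∧
          P = Matrix.diagonal fun i => if i ∈ S then (1 : ℂ) else 0] := by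
  subst hZ
  have hZh : (diagonal fun i => (d i : ℂ)).IsHermitian :=
    isHermitian_diagonal_of_self_adjoint _ (funext fun i => Complex.conj_ofReal (d i))
  tfae_have 1 ↔ 2 := by
    open scoped ComplexOrder in
    exact forall_skewHermitian_trace_commutator_mul_eq_zero_iff hherm hZh
  tfae_have 2 → 3 := fun h => by
    have hP := isDiag_of_mul_diagonal_eq_diagonal_mul (Complex.ofReal_injective.comp hd) h
    obtain ⟨S, rfl⟩ := hP.exists_eq_diagonal_ite_mem hidem
    exact ⟨S, by rw [← hrank, rank_diagonal_ite_mem], rfl⟩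
  tfae_have 3 → 2 := by
    rintro ⟨S, -, rfl⟩
    exact commute_diagonal _ _
  tfae_finish

/-- **Critical points of `P ↦ tr(P·Z)` on the Grassmannian of rank-`k` Hermitian
projections.**  Let `Z` be the diagonal matrix with pairwise distinct real diagonal
entries `d₁, …, d_N`, and let `P` be a Hermitian idempotent of rank `k ≤ N`.
The following are equivalent:
(i) `tr((X·P − P·X)·Z) = 0` for every skew-Hermitian `X`;
(ii) `P·Z = Z·P`;
(iii) `P` is the diagonal `0/1` matrix associated to a `k`-element subset
`S ⊆ {1, …, N}`, i.e. the orthogonal projection onto the span of the standard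
basis vectors `e_i`, `i ∈ S`. -/
theorem hermitian_projection_critical_tfae
    (N : ℕ) (hN : 1 ≤ N) (k : ℕ) (hk : k ≤ N)
    (d : Fin N → ℝ) (hd : Function.Injective d)
    (Z : Matrix (Fin N) (Fin N) ℂ) (hZ : Z = Matrix.diagonal fun i => (d i : ℂ))
    (P : Matrix (Fin N) (Fin N) ℂ)
    (hherm : Pᴴ = P) (hidem : P * P = P) (hrank : P.rank = k) :
    List.TFAE
      [∀ X : Matrix (Fin N) (Fin N) ℂ, Xᴴ = -X →
          Matrix.trace ((X * P - P * X) * Z) = 0,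
        P * Z = Z * P,
        ∃ S : Finset (Fin N), S.card = k ∧
          P = Matrix.diagonal fun i => if i ∈ S then (1 : ℂ) else 0] :=
  hermitian_projection_critical_tfae_general N k d hd Z hZ P hherm hidem hrank
end
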